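/- arXiv:1202.0263 — 2 statements merged into one kernel-verified Lean document; each statement's English description precedes it below -/
import Mathlib

section
/- Let q ≥ 2, V ≥ 2, E > 0, F ≥ 0, n > 0 be integers satisfying the Euler relation V − E + F = 1, the edge–face inequality 2E ≥ 4F + n, and E ≥ qV − 3. Then q = 2 and n ≤ 2. -/
theorem stmt_1 (q V E F n : ℤ) (hq : 2 ≤ q) (hV : 2 ≤ V) (hE : 0 < E)
    (hF : 0 ≤ F) (hn : 0 < n)
    (euler : V - E + F = 1)
    (hedge : 2 * E ≥ 4 * F + n)
    (hE2 : E ≥ q * V - 3) :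
    q = 2 ∧ n ≤ 2 := by
  have key : (4 - 2*q) * V ≥ n - 2 := by nlinarith
  have hq2 : q = 2 := by nlinarith [mul_le_mul_of_nonneg_right (by linarith : (4 : ℤ) - 2*q ≤ 4 - 2*q) (by linarith : (0:ℤ) ≤ V)]
  refine ⟨hq2, ?_⟩
  subst hq2
  linarith
end

section
/- Let q ≥ 2, V ≥ 2, E > 0, F ≥ 0, n ≥ 1 be integers with V − E + F = 1, 2E ≥ 4F + n, and E ≥ qV − 2. Then a contradiction follows; i.e., no such integers exist. -/
theorem stmt_2 (q V E F n : ℤ) (hq : 2 ≤ q) (hV : 2 ≤ V) (hE : 0 < E)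
    (hF : 0 ≤ F) (hn : 1 ≤ n)
    (euler : V - E + F = 1)
    (hedge : 2 * E ≥ 4 * F + n)
    (hE2 : E ≥ q * V - 2) :
    False := by
  nlinarith [mul_le_mul_of_nonneg_right hq (by linarith : (0:ℤ) ≤ V)]
end
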